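/- arXiv:1910.12560 — 3 statements merged into one kernel-verified Lean document; each statement's English description precedes it below -/
import Mathlib

section
/- The q-Appell series f(x,y) = Σ_{m,n≥0} (a;q)_{m+n}(b;q)_m(b';q)_n / ((c;q)_{m+n}(q;q)_m(q;q)_n) x^m y^n satisfies the q-difference equation (abx − c/q) f(q²x, qy) − (bx − 1) f(qx, y) − (ax − c/q) f(qx, qy) + (x−1) f(x,y) = 0, as an identity of formal power series in x and y. -/
/-- The q-Pochhammer symbol `(z;q)_n = ∏_{j=0}^{n-1} (1 - z q^j)`. -/
noncomputable def qPoch (q z : ℂ) (n : ℕ) : ℂ := ∏ j ∈ Finset.range n, (1 - z * q ^ j)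

lemma qPoch_succ (q z : ℂ) (n : ℕ) :
    qPoch q z (n + 1) = qPoch q z n * (1 - z * q ^ n) := by
  simp [qPoch, Finset.prod_range_succ]

lemma qPoch_ne_zero (q z : ℂ) (h : ∀ j : ℕ, z * q ^ j ≠ 1) (n : ℕ) :
    qPoch q z n ≠ 0 := by
  apply Finset.prod_ne_zero_iff.2
  intro j _
  intro hj
  exact h j (by linear_combination -hj)

/-- The q-Appell series `Φ⁽¹⁾(a;b,b';c;q;x,y)` satisfies the q-difference equation
`(abx - c/q) f(q²x,qy) - (bx - 1) f(qx,y) - (ax - c/q) f(qx,qy) + (x-1) f(x,y) = 0`,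
stated coefficientwise (as an identity of formal power series in `x` and `y`):
`F m n` denotes the coefficient of `x^m y^n`, extended by zero to negative indices. -/
theorem qAppell_first_qDifference (q a b b' c : ℂ)
    (hq0 : 0 < ‖q‖) (hq1 : ‖q‖ < 1)
    (hc : ∀ n : ℕ, c * q ^ n ≠ 1)
    (F : ℤ → ℤ → ℂ)
    (hF0 : ∀ m n : ℤ, m < 0 ∨ n < 0 → F m n = 0)
    (hF : ∀ m n : ℕ, F m n =
      qPoch q a (m + n) * qPoch q b m * qPoch q b' n
        / (qPoch q c (m + n) * qPoch q q m * qPoch q q n)) :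
    ∀ m n : ℤ,
      (a * b * q ^ (2 * (m - 1) + n) * F (m - 1) n
        - c / q * q ^ (2 * m + n) * F m n)
      - (b * q ^ (m - 1) * F (m - 1) n - q ^ m * F m n)
      - (a * q ^ ((m - 1) + n) * F (m - 1) n - c / q * q ^ (m + n) * F m n)
      + (F (m - 1) n - F m n) = 0 := by
  have hqne : q ≠ 0 := fun h => by simp [h] at hq0
  have hq1' : ∀ k : ℕ, q * q ^ k ≠ 1 := by
    intro k h
    have h2 : ‖q ^ (k + 1)‖ < 1 := by
      rw [norm_pow]
      exact pow_lt_one₀ (norm_nonneg q) hq1 (Nat.succ_ne_zero k)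
    rw [pow_succ, mul_comm, h, norm_one] at h2
    exact lt_irrefl 1 h2
  have hqq : ∀ k : ℕ, qPoch q q k ≠ 0 := qPoch_ne_zero q q hq1'
  have hqc : ∀ k : ℕ, qPoch q c k ≠ 0 := qPoch_ne_zero q c hc
  -- key recurrence
  have key : ∀ m n : ℕ,
      (1 - c * q ^ (m + n)) * (1 - q * q ^ m) * F (m + 1) n
        = (1 - a * q ^ (m + n)) * (1 - b * q ^ m) * F m n := by
    intro m n
    have h1 : ((m : ℤ) + 1) = ((m + 1 : ℕ) : ℤ) := by push_cast; ring
    rw [h1, hF (m + 1) n, hF m n]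
    have e1 : m + 1 + n = (m + n) + 1 := by ring
    rw [e1, qPoch_succ q a (m + n), qPoch_succ q c (m + n), qPoch_succ q b m,
      qPoch_succ q q m]
    have hc1 : (1 - c * q ^ (m + n)) ≠ 0 := fun h => hc (m + n) (by linear_combination -h)
    have hq2 : (1 - q * q ^ m) ≠ 0 := fun h => hq1' m (by linear_combination -h)
    field_simp [hqc (m+n), hqq m, hqq n, hc1, hq2]
  intro m n
  rcases lt_or_ge n 0 with hn | hn
  · rw [hF0 m n (Or.inr hn), hF0 (m - 1) n (Or.inr hn)]
    ring
  · obtain ⟨nn, rfl⟩ := Int.eq_ofNat_of_zero_le hn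
    rcases lt_or_ge m 1 with hm | hm
    · have h1 : F (m - 1) nn = 0 := hF0 _ _ (Or.inl (by omega))
      rcases lt_or_ge m 0 with hm0 | hm0
      · rw [h1, hF0 m nn (Or.inl hm0)]; ring
      · have hm0' : m = 0 := by omega
        subst hm0'
        rw [h1]
        have : (2 : ℤ) * 0 + (nn : ℤ) = (nn : ℕ) := by push_cast; ring
        rw [this]
        have h2 : (0 : ℤ) + (nn : ℤ) = ((nn : ℕ) : ℤ) := by push_cast; ring
        rw [h2]
        simp [zpow_natCast]
    · obtain ⟨mm, rfl⟩ : ∃ mm : ℕ, m = (mm : ℤ) + 1 := by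
        obtain ⟨k, rfl⟩ := Int.eq_ofNat_of_zero_le (le_trans zero_le_one hm)
        exact ⟨k - 1, by omega⟩
      have e1 : ((mm : ℤ) + 1 - 1) = (mm : ℤ) := by ring
      rw [e1]
      have hk := key mm nn
      have p1 : q ^ ((2:ℤ) * (mm:ℤ) + (nn:ℤ)) = q ^ (2 * mm + nn : ℕ) := by
        rw [show (2:ℤ) * (mm:ℤ) + (nn:ℤ) = ((2 * mm + nn : ℕ) : ℤ) by push_cast; ring,
          zpow_natCast]
      have p2 : q ^ ((2:ℤ) * ((mm:ℤ) + 1) + (nn:ℤ)) = q ^ (2 * mm + 2 + nn : ℕ) := by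
        rw [show (2:ℤ) * ((mm:ℤ) + 1) + (nn:ℤ) = ((2 * mm + 2 + nn : ℕ) : ℤ) by
          push_cast; ring, zpow_natCast]
      have p3 : q ^ ((mm:ℤ)) = q ^ (mm : ℕ) := zpow_natCast q mm
      have p4 : q ^ ((mm:ℤ) + (nn:ℤ)) = q ^ (mm + nn : ℕ) := by
        rw [show (mm:ℤ) + (nn:ℤ) = ((mm + nn : ℕ) : ℤ) by push_cast; ring, zpow_natCast]
      have p5 : q ^ ((mm:ℤ) + 1) = q ^ (mm + 1 : ℕ) := by
        rw [show (mm:ℤ) + 1 = ((mm + 1 : ℕ) : ℤ) by push_cast; ring, zpow_natCast]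
      have p6 : q ^ ((mm:ℤ) + 1 + (nn:ℤ)) = q ^ (mm + 1 + nn : ℕ) := by
        rw [show (mm:ℤ) + 1 + (nn:ℤ) = ((mm + 1 + nn : ℕ) : ℤ) by push_cast; ring,
          zpow_natCast]
      rw [p1, p2, p3, p4, p5, p6]
      field_simp
      linear_combination (-q) * hk
end

section
/- Let c_{n,k} = q^{k(k+1)/2} (Y₂Y₃;q)_k / ((Y₁q;q)_k (q;q)_k (q;q)_{n−k}) for 0 ≤ k ≤ n (and c_{n,k}=0 otherwise). Then for all n ≥ 0 and 0 ≤ k ≤ n, the identity −q^{2k}(1−q^{n−k+1})(1−q^{n−k+2})(1−Y₂Y₃q^{k−2}) c_{n,k−2} + q^{k+1}(1−q^{n−k+1})(1−Y₁q^{k−1})(1−q^{k−1}) c_{n,k−1} + q^{k}(1−Y₂q^{k−1})(1−Y₂Y₃q^{k−1})(1−q^{n−k+1}) c_{n,k−1} − (1−Y₂q^{k−1})(1−Y₁q^{k})(1−q^{k}) c_{n,k} = 0 holds. -/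
noncomputable def cCoef (q Y₁ Y₂ Y₃ : ℂ) (n : ℕ) (k : ℤ) : ℂ :=
  if 0 ≤ k ∧ k ≤ (n : ℤ) then
    q ^ (k.toNat * (k.toNat + 1) / 2) * qPoch q (Y₂ * Y₃) k.toNat
      / (qPoch q (Y₁ * q) k.toNat * qPoch q q k.toNat * qPoch q q (n - k.toNat))
  else 0

lemma one_sub_pow_ne_zero {q : ℂ} (hq : ‖q‖ < 1) {m : ℕ} (hm : m ≠ 0) : 1 - q ^ m ≠ 0 := by
  refine sub_ne_zero.2 fun h => ?_
  have : ‖q ^ m‖ < 1 := by rw [norm_pow]; exact pow_lt_one₀ (norm_nonneg q) hq hm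
  rw [← h, norm_one] at this
  exact lt_irrefl 1 this

lemma qPoch_self_ne_zero {q : ℂ} (hq : ‖q‖ < 1) (m : ℕ) : qPoch q q m ≠ 0 :=
  Finset.prod_ne_zero_iff.2 fun j _ => by
    rw [← pow_succ']; exact one_sub_pow_ne_zero hq j.succ_ne_zero

lemma triangle_succ (k : ℕ) : (k + 1) * (k + 2) / 2 = k * (k + 1) / 2 + (k + 1) := by
  rw [← Nat.add_mul_div_left _ _ two_pos]
  congr 1
  ring

section

variable {q : ℂ} (Y₁ Y₂ Y₃ : ℂ)

lemma cCoef_natCast {n k : ℕ} (hk : k ≤ n) :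
    cCoef q Y₁ Y₂ Y₃ n k = q ^ (k * (k + 1) / 2) * qPoch q (Y₂ * Y₃) k
      / (qPoch q (Y₁ * q) k * qPoch q q k * qPoch q q (n - k)) := by
  rw [cCoef, if_pos ⟨k.cast_nonneg, by exact_mod_cast hk⟩, Int.toNat_natCast]

lemma cCoef_eq_zero {n : ℕ} {k : ℤ} (hk : k < 0 ∨ (n : ℤ) < k) : cCoef q Y₁ Y₂ Y₃ n k = 0 :=
  if_neg (by omega)

variable {Y₁}

lemma cCoef_succ_of_lt (hq : ‖q‖ < 1) (hY₁ : ∀ k : ℕ, qPoch q (Y₁ * q) k ≠ 0) {n k : ℕ}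
    (hk : k < n) :
    (1 - Y₁ * q ^ (k + 1)) * (1 - q ^ (k + 1)) * cCoef q Y₁ Y₂ Y₃ n (k + 1 : ℕ)
      = q ^ (k + 1) * (1 - Y₂ * Y₃ * q ^ k) * (1 - q ^ (n - k)) * cCoef q Y₁ Y₂ Y₃ n k := by
  obtain ⟨j, rfl⟩ : ∃ j, n = k + 1 + j := ⟨n - (k + 1), by omega⟩
  rw [cCoef_natCast _ _ _ hk, cCoef_natCast _ _ _ hk.le, triangle_succ,
    show k + 1 + j - (k + 1) = j by omega, show k + 1 + j - k = j + 1 by omega]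
  have hY₁k : 1 - Y₁ * q ^ (k + 1) ≠ 0 := by
    have := hY₁ (k + 1)
    rw [qPoch_succ, mul_assoc, ← pow_succ'] at this
    exact right_ne_zero_of_mul this
  have := one_sub_pow_ne_zero hq k.succ_ne_zero
  have := one_sub_pow_ne_zero hq j.succ_ne_zero
  have := qPoch_self_ne_zero hq k
  have := qPoch_self_ne_zero hq j
  have := hY₁ k
  simp only [qPoch_succ, mul_assoc Y₁ q, ← pow_succ']
  field_simp
  ring

lemma cCoef_succ (hq : ‖q‖ < 1) (hY₁ : ∀ k : ℕ, qPoch q (Y₁ * q) k ≠ 0) (n : ℕ) (k : ℤ) :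
    (1 - Y₁ * q ^ (k + 1)) * (1 - q ^ (k + 1)) * cCoef q Y₁ Y₂ Y₃ n (k + 1)
      = q ^ (k + 1) * (1 - Y₂ * Y₃ * q ^ k) * (1 - q ^ ((n : ℤ) - k)) * cCoef q Y₁ Y₂ Y₃ n k := by
  by_cases hlo : k = -1
  · subst hlo
    simp [cCoef_eq_zero]
  by_cases hhi : k = n
  · subst hhi
    simp [cCoef_eq_zero]
  by_cases hmid : 0 ≤ k ∧ k < n
  · lift k to ℕ using hmid.1
    have hkn : k < n := by exact_mod_cast hmid.2
    have key := cCoef_succ_of_lt Y₂ Y₃ hq hY₁ hkn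
    rw [← Nat.cast_sub hkn.le]
    push_cast at key
    simpa only [← zpow_natCast, Nat.cast_succ] using key
  · rw [cCoef_eq_zero _ _ _ (by omega), cCoef_eq_zero _ _ _ (by omega), mul_zero, mul_zero]

end

/-- The key four-term coefficient identity in the proof of Theorem 3.4. -/
theorem cCoef_four_term_identity (q Y₁ Y₂ Y₃ : ℂ)
    (hq0 : 0 < ‖q‖) (hq1 : ‖q‖ < 1)
    (hY₁ : ∀ k : ℕ, qPoch q (Y₁ * q) k ≠ 0) :
    ∀ n k : ℕ, k ≤ n →
      -q ^ (2 * k) * (1 - q ^ (n - k + 1)) * (1 - q ^ (n - k + 2))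
          * (1 - Y₂ * Y₃ * q ^ ((k : ℤ) - 2)) * cCoef q Y₁ Y₂ Y₃ n ((k : ℤ) - 2)
      + q ^ (k + 1) * (1 - q ^ (n - k + 1)) * (1 - Y₁ * q ^ ((k : ℤ) - 1))
          * (1 - q ^ ((k : ℤ) - 1)) * cCoef q Y₁ Y₂ Y₃ n ((k : ℤ) - 1)
      + q ^ k * (1 - Y₂ * q ^ ((k : ℤ) - 1)) * (1 - Y₂ * Y₃ * q ^ ((k : ℤ) - 1))
          * (1 - q ^ (n - k + 1)) * cCoef q Y₁ Y₂ Y₃ n ((k : ℤ) - 1)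
      - (1 - Y₂ * q ^ ((k : ℤ) - 1)) * (1 - Y₁ * q ^ k) * (1 - q ^ k)
          * cCoef q Y₁ Y₂ Y₃ n (k : ℤ) = 0 := by
  intro n k hk
  have hq : q ≠ 0 := norm_pos_iff.1 hq0
  have zpow_eq_pow (m : ℕ) (e : ℤ) (he : e = m) : q ^ e = q ^ m := by rw [he, zpow_natCast]
  have rec₁ := cCoef_succ Y₂ Y₃ hq1 hY₁ n ((k : ℤ) - 1)
  have rec₂ := cCoef_succ Y₂ Y₃ hq1 hY₁ n ((k : ℤ) - 2)
  rw [sub_add_cancel, zpow_eq_pow k _ rfl,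
    zpow_eq_pow (n - k + 1) (n - (k - 1)) (by omega)] at rec₁
  rw [show (k : ℤ) - 2 + 1 = k - 1 by ring,
    zpow_eq_pow (n - k + 2) (n - (k - 2)) (by omega)] at rec₂
  have hsq : q ^ (2 * k) = q ^ (k + 1) * q ^ ((k : ℤ) - 1) := by
    rw [← zpow_natCast, ← zpow_natCast, ← zpow_add₀ hq]
    congr 1
    push_cast
    ring
  rw [hsq]
  linear_combination
    q ^ (k + 1) * (1 - q ^ (n - k + 1)) * rec₂ - (1 - Y₂ * q ^ ((k : ℤ) - 1)) * rec₁
end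

section
/- Suppose g solves the variant of the q-hypergeometric equation of degree three with parameters (h₁,h₂,h₃,l₁,l₂,l₃,α,t₁,t₂,t₃). Divide the equation by −q^{h₃+1/2}t₃ and let t₃ → ∞ with x fixed. Then the limiting equation is (x−q^{h₁+1/2}t₁)(x−q^{h₂+1/2}t₂)g(x/q) + q^{2α+l₃−h₃}(x−q^{l₁−1/2}t₁)(x−q^{l₂−1/2}t₂)g(qx) − [(q^{α}+q^{α−h₃+l₃})x² − q^{(h₁+h₂+l₁+l₂+2α−h₃+l₃)/2}{(q^{−h₁}+q^{−l₁})t₂ + (q^{−h₂}+q^{−l₂})t₁}x + q^{(h₁+h₂+l₁+l₂+2α−h₃+l₃)/2}(q^{1/2}+q^{−1/2})t₁t₂]g(x) = 0, which is the variant of the q-hypergeometric equation of degree two with {α₁,α₂} = {α, α−h₃+l₃}. Formally: the coefficient polynomials of the degree-three equation, divided by −q^{h₃+1/2}t₃, converge as t₃ → ∞ (coefficientwise in x) to the coefficient polynomials of the degree-two equation with these parameters. -/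
/-!
Each coefficient of the degree-three equation is affine in `t₃`, so after division by
`-q^{h₃+1/2} t₃` only the ratio of its `t₃`-coefficient to `-q^{h₃+1/2}` survives as
`t₃ → ∞`. Identifying that ratio with the degree-two coefficient is the law of exponents
`q^a q^b = q^{a+b}`.
-/

/-- Real power `q^e` of a positive real base, viewed as a complex number. -/
noncomputable def qr (q e : ℝ) : ℂ := ((q ^ e : ℝ) : ℂ)

open Filter Bornology Topology

lemma qr_mul {q : ℝ} (hq0 : 0 < q) (a b : ℝ) : qr q a * qr q b = qr q (a + b) := by
  simp [qr, Real.rpow_add hq0]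

lemma qr_ne_zero {q : ℝ} (hq0 : 0 < q) (a : ℝ) : qr q a ≠ 0 := by
  simp [qr, (Real.rpow_pos_of_pos hq0 a).ne']

lemma qr_one (q : ℝ) : qr q 1 = q := by
  simp [qr]

lemma tendsto_div_const_mul_cobounded_of_affine {𝕜 : Type*} [NormedField 𝕜] {c : 𝕜}
    (hc : c ≠ 0) (L A : 𝕜) {N : 𝕜 → 𝕜} (hN : ∀ t, N t = L * (c * t) + A) :
    Tendsto (fun t => N t / (c * t)) (cobounded 𝕜) (𝓝 L) := by
  have hlim : Tendsto (fun t : 𝕜 => L + A / c * t⁻¹) (cobounded 𝕜) (𝓝 (L + A / c * 0)) :=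
    tendsto_const_nhds.add (tendsto_inv₀_cobounded.const_mul _)
  rw [mul_zero, add_zero] at hlim
  refine hlim.congr' ?_
  filter_upwards [eventually_ne_cobounded 0] with t ht
  rw [hN]
  field_simp

theorem degree_three_to_degree_two_limit_general (q : ℝ) (hq0 : 0 < q)
    (h₁ h₂ h₃ l₁ l₂ l₃ α : ℝ) (t₁ t₂ : ℂ) (x : ℂ) :
    Filter.Tendsto (fun t₃ : ℂ =>
        (x - qr q (h₁ + 1/2) * t₁) * (x - qr q (h₂ + 1/2) * t₂)
          * (x - qr q (h₃ + 1/2) * t₃) / (-(qr q (h₃ + 1/2)) * t₃))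
      (Bornology.cobounded ℂ)
      (nhds ((x - qr q (h₁ + 1/2) * t₁) * (x - qr q (h₂ + 1/2) * t₂)))
    ∧
    Filter.Tendsto (fun t₃ : ℂ =>
        qr q (2 * α + 1) * (x - qr q (l₁ - 1/2) * t₁) * (x - qr q (l₂ - 1/2) * t₂)
          * (x - qr q (l₃ - 1/2) * t₃) / (-(qr q (h₃ + 1/2)) * t₃))
      (Bornology.cobounded ℂ)
      (nhds (qr q (2 * α + l₃ - h₃) * (x - qr q (l₁ - 1/2) * t₁)
        * (x - qr q (l₂ - 1/2) * t₂)))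
    ∧
    Filter.Tendsto (fun t₃ : ℂ =>
        qr q α * (-((q : ℂ) + 1) * x ^ 3
          + qr q (1/2) * ((qr q h₁ + qr q l₁) * t₁ + (qr q h₂ + qr q l₂) * t₂
              + (qr q h₃ + qr q l₃) * t₃) * x ^ 2
          - qr q ((h₁ + h₂ + h₃ + l₁ + l₂ + l₃ + 1) / 2)
              * ((qr q (-h₁) + qr q (-l₁)) * t₂ * t₃
                + (qr q (-h₂) + qr q (-l₂)) * t₁ * t₃
                + (qr q (-h₃) + qr q (-l₃)) * t₁ * t₂) * x
          + qr q ((h₁ + h₂ + h₃ + l₁ + l₂ + l₃) / 2) * ((q : ℂ) + 1) * t₁ * t₂ * t₃)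
          / (-(qr q (h₃ + 1/2)) * t₃))
      (Bornology.cobounded ℂ)
      (nhds (-((qr q α + qr q (α - h₃ + l₃)) * x ^ 2
        - qr q ((h₁ + h₂ + l₁ + l₂ + 2 * α - h₃ + l₃) / 2)
            * ((qr q (-h₁) + qr q (-l₁)) * t₂ + (qr q (-h₂) + qr q (-l₂)) * t₁) * x
        + qr q ((h₁ + h₂ + l₁ + l₂ + 2 * α - h₃ + l₃) / 2)
            * (qr q (1/2) + qr q (-1/2)) * t₁ * t₂))) := by
  have hc : -qr q (h₃ + 1/2) ≠ 0 := neg_ne_zero.mpr (qr_ne_zero hq0 _)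
  have hgqx : qr q (2 * α + l₃ - h₃) * qr q (h₃ + 1/2)
      = qr q (2 * α + 1) * qr q (l₃ - 1/2) := by
    simp only [qr_mul hq0]; ring_nf
  have hx2 : qr q α * qr q (1/2) * (qr q h₃ + qr q l₃)
      = qr q (h₃ + 1/2) * (qr q α + qr q (α - h₃ + l₃)) := by
    simp only [mul_add, qr_mul hq0]; ring_nf
  have hx1 : qr q α * qr q ((h₁ + h₂ + h₃ + l₁ + l₂ + l₃ + 1) / 2)
      = qr q (h₃ + 1/2) * qr q ((h₁ + h₂ + l₁ + l₂ + 2 * α - h₃ + l₃) / 2) := by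
    simp only [qr_mul hq0]; ring_nf
  have hx0 : qr q α * qr q ((h₁ + h₂ + h₃ + l₁ + l₂ + l₃) / 2) * (q + 1)
      = qr q (h₃ + 1/2) * qr q ((h₁ + h₂ + l₁ + l₂ + 2 * α - h₃ + l₃) / 2)
        * (qr q (1/2) + qr q (-1/2)) := by
    simp only [← qr_one q, mul_add, mul_one, qr_mul hq0]; ring_nf
  refine ⟨tendsto_div_const_mul_cobounded_of_affine hc _
      ((x - qr q (h₁ + 1/2) * t₁) * (x - qr q (h₂ + 1/2) * t₂) * x) fun t => by ring,
    tendsto_div_const_mul_cobounded_of_affine hc _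
      (qr q (2 * α + 1) * (x - qr q (l₁ - 1/2) * t₁) * (x - qr q (l₂ - 1/2) * t₂) * x)
      fun t => ?_,
    tendsto_div_const_mul_cobounded_of_affine hc _
      (qr q α * (-((q : ℂ) + 1) * x ^ 3
        + qr q (1/2) * ((qr q h₁ + qr q l₁) * t₁ + (qr q h₂ + qr q l₂) * t₂) * x ^ 2
        - qr q ((h₁ + h₂ + h₃ + l₁ + l₂ + l₃ + 1) / 2)
          * ((qr q (-h₃) + qr q (-l₃)) * t₁ * t₂) * x)) fun t => ?_⟩
  · linear_combination t * (x - qr q (l₁ - 1/2) * t₁) * (x - qr q (l₂ - 1/2) * t₂) * hgqx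
  · linear_combination t * x ^ 2 * hx2
      - t * x * ((qr q (-h₁) + qr q (-l₁)) * t₂ + (qr q (-h₂) + qr q (-l₂)) * t₁) * hx1
      + t * t₁ * t₂ * hx0

/-- Degeneration of the variant of the q-hypergeometric equation of degree three to the
variant of degree two: dividing the three coefficient polynomials by `-q^{h₃+1/2}t₃` and
letting `t₃ → ∞` (pointwise in `x`, equivalently coefficientwise), they converge to the
coefficient polynomials of the degree-two equation with `{α₁,α₂} = {α, α-h₃+l₃}`. -/
theorem degree_three_to_degree_two_limit (q : ℝ) (hq0 : 0 < q) (hq1 : q < 1)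
    (h₁ h₂ h₃ l₁ l₂ l₃ α : ℝ) (t₁ t₂ : ℂ) (ht₁ : t₁ ≠ 0) (ht₂ : t₂ ≠ 0) (x : ℂ) :
    Filter.Tendsto (fun t₃ : ℂ =>
        (x - qr q (h₁ + 1/2) * t₁) * (x - qr q (h₂ + 1/2) * t₂)
          * (x - qr q (h₃ + 1/2) * t₃) / (-(qr q (h₃ + 1/2)) * t₃))
      (Bornology.cobounded ℂ)
      (nhds ((x - qr q (h₁ + 1/2) * t₁) * (x - qr q (h₂ + 1/2) * t₂)))
    ∧
    Filter.Tendsto (fun t₃ : ℂ =>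
        qr q (2 * α + 1) * (x - qr q (l₁ - 1/2) * t₁) * (x - qr q (l₂ - 1/2) * t₂)
          * (x - qr q (l₃ - 1/2) * t₃) / (-(qr q (h₃ + 1/2)) * t₃))
      (Bornology.cobounded ℂ)
      (nhds (qr q (2 * α + l₃ - h₃) * (x - qr q (l₁ - 1/2) * t₁)
        * (x - qr q (l₂ - 1/2) * t₂)))
    ∧
    Filter.Tendsto (fun t₃ : ℂ =>
        qr q α * (-((q : ℂ) + 1) * x ^ 3
          + qr q (1/2) * ((qr q h₁ + qr q l₁) * t₁ + (qr q h₂ + qr q l₂) * t₂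
              + (qr q h₃ + qr q l₃) * t₃) * x ^ 2
          - qr q ((h₁ + h₂ + h₃ + l₁ + l₂ + l₃ + 1) / 2)
              * ((qr q (-h₁) + qr q (-l₁)) * t₂ * t₃
                + (qr q (-h₂) + qr q (-l₂)) * t₁ * t₃
                + (qr q (-h₃) + qr q (-l₃)) * t₁ * t₂) * x
          + qr q ((h₁ + h₂ + h₃ + l₁ + l₂ + l₃) / 2) * ((q : ℂ) + 1) * t₁ * t₂ * t₃)
          / (-(qr q (h₃ + 1/2)) * t₃))
      (Bornology.cobounded ℂ)
      (nhds (-((qr q α + qr q (α - h₃ + l₃)) * x ^ 2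
        - qr q ((h₁ + h₂ + l₁ + l₂ + 2 * α - h₃ + l₃) / 2)
            * ((qr q (-h₁) + qr q (-l₁)) * t₂ + (qr q (-h₂) + qr q (-l₂)) * t₁) * x
        + qr q ((h₁ + h₂ + l₁ + l₂ + 2 * α - h₃ + l₃) / 2)
            * (qr q (1/2) + qr q (-1/2)) * t₁ * t₂))) :=
  degree_three_to_degree_two_limit_general q hq0 h₁ h₂ h₃ l₁ l₂ l₃ α t₁ t₂ x
end
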